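/- arXiv:2002.10164 — 7 statements merged into one kernel-verified Lean document; each statement's English description precedes it below -/
import Mathlib

section
/- If C is a symmetric positive definite real dX×dX matrix and V := H C Hᵀ is invertible, then the block matrix S(C,H) is symmetric and positive definite; consequently the Gaussian quasi-likelihood based on S(C,H)⁻¹ is well defined. -/
/-! With `z = Hᵀ y`, the quadratic form of `S(C,H)` is
`xᵀCx + xᵀCz + ⅓ zᵀCz = (x + z/2)ᵀC(x + z/2) + (1/12) zᵀCz`: the Schur complement of `C` in
`S(C,H)` is `V/12`, which is positive definite exactly when `V = H C Hᵀ` is invertible. -/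

open Matrix

/-- The block matrix `S(C,H)` of the paper. -/
noncomputable def Smat {dX dY : ℕ} (C : Matrix (Fin dX) (Fin dX) ℝ)
    (H : Matrix (Fin dY) (Fin dX) ℝ) :
    Matrix (Fin dX ⊕ Fin dY) (Fin dX ⊕ Fin dY) ℝ :=
  fromBlocks C (((1:ℝ)/2) • (C * Hᵀ)) (((1:ℝ)/2) • (H * C)) (((1:ℝ)/3) • (H * C * Hᵀ))

namespace Matrix

open scoped ComplexOrder

variable {m n 𝕜 : Type*} [Fintype m] [Fintype n] [RCLike 𝕜]

theorem PosDef.posDef_fromBlocks₁₁_iff [DecidableEq m] [DecidableEq n] {A : Matrix m m 𝕜}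
    (B : Matrix m n 𝕜) (D : Matrix n n 𝕜) (hA : A.PosDef) [Invertible A] :
    (fromBlocks A B Bᴴ D).PosDef ↔ (D - Bᴴ * A⁻¹ * B).PosDef := by
  have hdet : (fromBlocks A B Bᴴ D).det = A.det * (D - Bᴴ * A⁻¹ * B).det := by
    rw [det_fromBlocks₁₁, invOf_eq_nonsing_inv]
  constructor
  · intro h
    have hpsd := (hA.fromBlocks₁₁ B D).mp h.posSemidef
    rw [hpsd.posDef_iff_det_ne_zero]
    exact right_ne_zero_of_mul (hdet ▸ h.det_pos.ne')
  · intro h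
    have hpsd := (hA.fromBlocks₁₁ B D).mpr h.posSemidef
    rw [hpsd.posDef_iff_det_ne_zero, hdet]
    exact mul_ne_zero hA.det_pos.ne' h.det_pos.ne'

theorem PosDef.mul_mul_conjTranspose_of_det_ne_zero [DecidableEq m] {A : Matrix n n 𝕜}
    (hA : A.PosDef) {B : Matrix m n 𝕜} (hB : (B * A * Bᴴ).det ≠ 0) : (B * A * Bᴴ).PosDef :=
  (hA.posSemidef.mul_mul_conjTranspose_same B).posDef_iff_det_ne_zero.mpr hB

end Matrix

section Smat

variable {dX dY : ℕ} {C : Matrix (Fin dX) (Fin dX) ℝ} (H : Matrix (Fin dY) (Fin dX) ℝ)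

theorem Smat_eq_fromBlocks (hC : C.IsHermitian) :
    Smat C H = fromBlocks C ((1 / 2 : ℝ) • (C * Hᵀ)) ((1 / 2 : ℝ) • (C * Hᵀ))ᴴ
      ((1 / 3 : ℝ) • (H * C * Hᵀ)) := by
  rw [Smat, conjTranspose_smul, conjTranspose_mul, conjTranspose_eq_transpose_of_trivial,
    transpose_transpose, hC.eq, star_trivial]

theorem Smat_schurComplement_eq (hCh : C.IsHermitian) (hC : IsUnit C.det) :
    (1 / 3 : ℝ) • (H * C * Hᵀ) - ((1 / 2 : ℝ) • (C * Hᵀ))ᴴ * C⁻¹ * ((1 / 2 : ℝ) • (C * Hᵀ))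
      = (1 / 12 : ℝ) • (H * C * Hᵀ) := by
  have hcancel : H * C * C⁻¹ * (C * Hᵀ) = H * C * Hᵀ := by
    rw [Matrix.mul_assoc (H * C), ← Matrix.mul_assoc C⁻¹, nonsing_inv_mul _ hC, Matrix.one_mul]
  rw [conjTranspose_smul, conjTranspose_mul, conjTranspose_eq_transpose_of_trivial,
    transpose_transpose, hCh.eq, star_trivial, smul_mul, smul_mul, Matrix.mul_smul, hcancel,
    smul_smul, ← sub_smul]
  norm_num

end Smat

/-- If `C` is symmetric positive definite and `V = H C Hᵀ` is invertible, then `S(C,H)`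
is symmetric positive definite. -/
theorem stmt2 {dX dY : ℕ} (C : Matrix (Fin dX) (Fin dX) ℝ)
    (H : Matrix (Fin dY) (Fin dX) ℝ)
    (hC : C.PosDef) (hV : IsUnit (H * C * Hᵀ).det) :
    (Smat C H).PosDef := by
  have hCunit : IsUnit C.det := hC.det_pos.ne'.isUnit
  have : Invertible C := C.invertibleOfIsUnitDet hCunit
  have hVpos : (H * C * Hᵀ).PosDef := by
    simpa using hC.mul_mul_conjTranspose_of_det_ne_zero (B := H) (by simpa using hV.ne_zero)
  rw [Smat_eq_fromBlocks H hC.isHermitian, hC.posDef_fromBlocks₁₁_iff,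
    Smat_schurComplement_eq H hC.isHermitian hCunit]
  exact hVpos.smul (by norm_num)
end

section
/- Suppose C and V := H C Hᵀ are invertible. Then for every a ∈ ℝ^dX one has S(C,H)⁻¹ · (a ⊕ (1/2)·H a) = (C⁻¹ a) ⊕ 0. In particular, for every u ∈ ℝ^dY, ⟨S(C,H)⁻¹ (a ⊕ (1/2)·H a), 0 ⊕ u⟩ = 0, which is the algebraic orthogonality identity (4.13) of the paper. -/
open Matrix

lemma smat_det_isUnit {dX dY : ℕ} (C : Matrix (Fin dX) (Fin dX) ℝ)
    (H : Matrix (Fin dY) (Fin dX) ℝ)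
    (hC : IsUnit C.det) (hV : IsUnit (H * C * Hᵀ).det) :
    IsUnit (Smat C H).det := by
  haveI : Invertible C := C.invertibleOfIsUnitDet hC
  rw [Smat, Matrix.det_fromBlocks₁₁]
  have hschur : ((1:ℝ)/3) • (H * C * Hᵀ) -
      ((1:ℝ)/2) • (H * C) * ⅟C * (((1:ℝ)/2) • (C * Hᵀ)) =
      ((1:ℝ)/12) • (H * C * Hᵀ) := by
    have : ((1:ℝ)/2) • (H * C) * ⅟C * (((1:ℝ)/2) • (C * Hᵀ)) =
        ((1:ℝ)/4) • (H * C * Hᵀ) := by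
      rw [Matrix.smul_mul, Matrix.smul_mul, Matrix.mul_smul, smul_smul]
      congr 1
      · norm_num
      · rw [Matrix.mul_assoc (H * C), Matrix.mul_assoc H,
          Matrix.invOf_mul_cancel_left, Matrix.mul_assoc]
    rw [this, ← sub_smul]
    norm_num
  rw [hschur, Matrix.det_smul]
  exact hC.mul (((isUnit_iff_ne_zero.mpr (by norm_num : ((1:ℝ)/12) ≠ 0)).pow (Fintype.card (Fin dY))).mul hV)

/-- `S(C,H)⁻¹ (a ⊕ (1/2)·H a) = (C⁻¹ a) ⊕ 0`, and the algebraic orthogonality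
identity (4.13) of the paper. -/
theorem stmt3 {dX dY : ℕ} (C : Matrix (Fin dX) (Fin dX) ℝ)
    (H : Matrix (Fin dY) (Fin dX) ℝ)
    (hC : IsUnit C.det) (hV : IsUnit (H * C * Hᵀ).det)
    (a : Fin dX → ℝ) :
    (Smat C H)⁻¹.mulVec (Sum.elim a (((1:ℝ)/2) • H.mulVec a)) =
      Sum.elim (C⁻¹.mulVec a) 0 ∧
    ∀ u : Fin dY → ℝ,
      (Smat C H)⁻¹.mulVec (Sum.elim a (((1:ℝ)/2) • H.mulVec a)) ⬝ᵥ Sum.elim 0 u = 0 := by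
  have hS : IsUnit (Smat C H).det := smat_det_isUnit C H hC hV
  have key : (Smat C H).mulVec (Sum.elim (C⁻¹.mulVec a) 0) =
      Sum.elim a (((1:ℝ)/2) • H.mulVec a) := by
    have hCC : C * C⁻¹ = 1 := Matrix.mul_nonsing_inv C hC
    simp [Smat, Matrix.fromBlocks_mulVec, Matrix.smul_mulVec,
      Matrix.mulVec_mulVec, Matrix.mul_assoc, hCC]
  have h1 : (Smat C H)⁻¹.mulVec (Sum.elim a (((1:ℝ)/2) • H.mulVec a)) =
      Sum.elim (C⁻¹.mulVec a) 0 := by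
    rw [← key, Matrix.mulVec_mulVec, Matrix.nonsing_inv_mul _ hS, Matrix.one_mulVec]
  refine ⟨h1, fun u => ?_⟩
  rw [h1, sumElim_dotProduct_sumElim, dotProduct_zero,
    zero_dotProduct, add_zero]
end

section
/- Suppose C and V := H C Hᵀ are invertible. Then for all a, b ∈ ℝ^dX, ⟨a ⊕ (1/2)·H a, S(C,H)⁻¹ (b ⊕ (1/2)·H b)⟩ = ⟨a, C⁻¹ b⟩. This is the pointwise identity behind the equality Γ₂₂ = ∫ S⁻¹[(∂₂A, 2⁻¹H_x∂₂A)^⊗2] dν = ∫ ∂₂Aᵀ C⁻¹ ∂₂A dν in the paper. -/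
open Matrix

/-- `⟨a ⊕ (1/2)·H a, S(C,H)⁻¹ (b ⊕ (1/2)·H b)⟩ = ⟨a, C⁻¹ b⟩`: the pointwise identity
behind the formula for `Γ₂₂` in the paper. -/
theorem stmt4 {dX dY : ℕ} (C : Matrix (Fin dX) (Fin dX) ℝ)
    (H : Matrix (Fin dY) (Fin dX) ℝ)
    (hC : IsUnit C.det) (hV : IsUnit (H * C * Hᵀ).det)
    (a b : Fin dX → ℝ) :
    Sum.elim a (((1:ℝ)/2) • H.mulVec a) ⬝ᵥ
        (Smat C H)⁻¹.mulVec (Sum.elim b (((1:ℝ)/2) • H.mulVec b)) =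
      a ⬝ᵥ C⁻¹.mulVec b := by
  have hCi : Invertible C := C.invertibleOfIsUnitDet hC
  have hIC : ⅟C = C⁻¹ := invOf_eq_nonsing_inv C
  -- Schur complement computation
  have hschur : ((1:ℝ)/3) • (H * C * Hᵀ) - ((1:ℝ)/2) • (H * C) * ⅟C * (((1:ℝ)/2) • (C * Hᵀ))
      = ((1:ℝ)/12) • (H * C * Hᵀ) := by
    rw [hIC]
    have : H * C * C⁻¹ = H := by
      rw [Matrix.mul_assoc, Matrix.mul_nonsing_inv C hC, Matrix.mul_one]
    rw [Matrix.smul_mul, Matrix.mul_smul, Matrix.smul_mul, smul_smul, this,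
      ← Matrix.mul_assoc, ← sub_smul]
    norm_num
  have hS : IsUnit (Smat C H).det := by
    rw [Smat, det_fromBlocks₁₁, hschur, det_smul]
    exact hC.mul (((isUnit_iff_ne_zero.mpr (by norm_num : ((1:ℝ)/12) ≠ 0)).pow _).mul hV)
  -- key vector identity
  have hkey : (Smat C H).mulVec (Sum.elim (C⁻¹.mulVec b) 0)
      = Sum.elim b (((1:ℝ)/2) • H.mulVec b) := by
    rw [Smat, fromBlocks_mulVec]
    simp only [Sum.elim_comp_inl, Sum.elim_comp_inr]
    have h1 : C.mulVec (C⁻¹.mulVec b) = b := by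
      rw [mulVec_mulVec, Matrix.mul_nonsing_inv C hC, one_mulVec]
    have h2 : (((1:ℝ)/2) • (H * C)).mulVec (C⁻¹.mulVec b) = ((1:ℝ)/2) • H.mulVec b := by
      rw [smul_mulVec, mulVec_mulVec, Matrix.mul_assoc,
        Matrix.mul_nonsing_inv C hC, Matrix.mul_one]
    rw [h1, h2, mulVec_zero, mulVec_zero, add_zero, add_zero]
  have hinv : (Smat C H)⁻¹.mulVec (Sum.elim b (((1:ℝ)/2) • H.mulVec b))
      = Sum.elim (C⁻¹.mulVec b) 0 := by
    rw [← hkey, mulVec_mulVec, Matrix.nonsing_inv_mul _ hS, one_mulVec]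
  rw [hinv, sumElim_dotProduct_sumElim, dotProduct_zero, add_zero]
end

section
/- Suppose C and V := H C Hᵀ are invertible. Then for all u, u' ∈ ℝ^dY, ⟨0 ⊕ u, S(C,H)⁻¹ (0 ⊕ u')⟩ = 12·⟨u, V⁻¹ u'⟩; equivalently, S(C,H)⁻¹ (0 ⊕ u') = (−6·Hᵀ V⁻¹ u') ⊕ (12·V⁻¹ u'). This is the pointwise identity behind Γ₃₃ = ∫ S⁻¹[(0, ∂₃H)^⊗2] dν = 12 ∫ ∂₃Hᵀ V⁻¹ ∂₃H dν in the paper. -/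
open Matrix

/-- `⟨0 ⊕ u, S(C,H)⁻¹ (0 ⊕ u')⟩ = 12·⟨u, V⁻¹ u'⟩` and the explicit value of
`S(C,H)⁻¹ (0 ⊕ u')`: the pointwise identity behind the formula for `Γ₃₃` in the paper. -/
theorem stmt5 {dX dY : ℕ} (C : Matrix (Fin dX) (Fin dX) ℝ)
    (H : Matrix (Fin dY) (Fin dX) ℝ)
    (hC : IsUnit C.det) (hV : IsUnit (H * C * Hᵀ).det) :
    (∀ u u' : Fin dY → ℝ,
      Sum.elim 0 u ⬝ᵥ (Smat C H)⁻¹.mulVec (Sum.elim 0 u') =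
        12 * (u ⬝ᵥ (H * C * Hᵀ)⁻¹.mulVec u')) ∧
    (∀ u' : Fin dY → ℝ,
      (Smat C H)⁻¹.mulVec (Sum.elim 0 u') =
        Sum.elim ((-6:ℝ) • (Hᵀ * (H * C * Hᵀ)⁻¹).mulVec u')
          ((12:ℝ) • ((H * C * Hᵀ)⁻¹).mulVec u')) := by
  set V := H * C * Hᵀ with hVdef
  have hC1 : C * C⁻¹ = 1 := mul_nonsing_inv _ hC
  have hV1 : V * V⁻¹ = 1 := mul_nonsing_inv _ hV
  have key : H * (C * (Hᵀ * (V⁻¹ * H))) = H := by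
    rw [← Matrix.mul_assoc, ← Matrix.mul_assoc, ← Matrix.mul_assoc, ← hVdef, hV1,
      Matrix.one_mul]
  have key2 : H * (C * (Hᵀ * V⁻¹)) = 1 := by
    rw [← Matrix.mul_assoc, ← Matrix.mul_assoc, ← hVdef, hV1]
  have key3 : V * (V⁻¹ * H) = H := by
    rw [← Matrix.mul_assoc, hV1, Matrix.one_mul]
  have hSinv : (Smat C H)⁻¹ =
      fromBlocks (C⁻¹ + (3:ℝ) • (Hᵀ * V⁻¹ * H)) ((-6:ℝ) • (Hᵀ * V⁻¹))
        ((-6:ℝ) • (V⁻¹ * H)) ((12:ℝ) • V⁻¹) := by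
    apply inv_eq_right_inv
    rw [Smat, fromBlocks_multiply, ← fromBlocks_one, ← hVdef]
    have e11 : C * (C⁻¹ + (3:ℝ) • (Hᵀ * V⁻¹ * H)) +
        ((1:ℝ)/2) • (C * Hᵀ) * ((-6:ℝ) • (V⁻¹ * H)) = 1 := by
      simp only [Matrix.mul_add, Matrix.mul_smul, Matrix.smul_mul, smul_smul,
        Matrix.mul_assoc, hC1, Matrix.mul_one]
      module
    have e12 : C * ((-6:ℝ) • (Hᵀ * V⁻¹)) + ((1:ℝ)/2) • (C * Hᵀ) * ((12:ℝ) • V⁻¹) = 0 := by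
      simp only [Matrix.mul_smul, Matrix.smul_mul, smul_smul, Matrix.mul_assoc]
      module
    have e21 : ((1:ℝ)/2) • (H * C) * (C⁻¹ + (3:ℝ) • (Hᵀ * V⁻¹ * H)) +
        ((1:ℝ)/3) • V * ((-6:ℝ) • (V⁻¹ * H)) = 0 := by
      simp only [Matrix.mul_add, Matrix.mul_smul, Matrix.smul_mul, smul_smul,
        Matrix.mul_assoc, hC1, Matrix.mul_one, key, key3]
      module
    have e22 : ((1:ℝ)/2) • (H * C) * ((-6:ℝ) • (Hᵀ * V⁻¹)) +
        ((1:ℝ)/3) • V * ((12:ℝ) • V⁻¹) = 1 := by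
      simp only [Matrix.mul_smul, Matrix.smul_mul, smul_smul, Matrix.mul_assoc, key2, hV1]
      module
    rw [e11, e12, e21, e22]
  have hmv : ∀ u' : Fin dY → ℝ,
      (Smat C H)⁻¹.mulVec (Sum.elim 0 u') =
        Sum.elim ((-6:ℝ) • (Hᵀ * V⁻¹).mulVec u') ((12:ℝ) • V⁻¹.mulVec u') := by
    intro u'
    rw [hSinv, fromBlocks_mulVec]
    simp [Matrix.smul_mulVec, Matrix.neg_mulVec]
  refine ⟨fun u u' => ?_, hmv⟩
  rw [hmv u']
  simp [dotProduct, Fintype.sum_sum_type, Finset.mul_sum]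
  exact Finset.sum_congr rfl fun i _ => by ring
end

section
/- Suppose C and V := H C Hᵀ are invertible. Let A₂ be any real dX×p₂ matrix, H₃ any real dY×p₃ matrix, and let M be the (dX+dY)×(p₂+p₃) block matrix M = [[A₂, 0], [(1/2)·H A₂, H₃]]. Then Mᵀ S(C,H)⁻¹ M is block diagonal: Mᵀ S(C,H)⁻¹ M = [[A₂ᵀ C⁻¹ A₂, 0], [0, 12·H₃ᵀ V⁻¹ H₃]]. This is the block-diagonal information identity (5.39)–(5.40) of the paper, expressing the asymptotic orthogonality of the drift parameters θ₂ and θ₃. -/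
open Matrix

/-- The block-diagonal information identity (5.39)–(5.40) of the paper, expressing the
asymptotic orthogonality of the drift parameters `θ₂` and `θ₃`. -/
theorem stmt6 {dX dY p₂ p₃ : ℕ} (C : Matrix (Fin dX) (Fin dX) ℝ)
    (H : Matrix (Fin dY) (Fin dX) ℝ)
    (hC : IsUnit C.det) (hV : IsUnit (H * C * Hᵀ).det)
    (A₂ : Matrix (Fin dX) (Fin p₂) ℝ) (H₃ : Matrix (Fin dY) (Fin p₃) ℝ) :
    (fromBlocks A₂ 0 (((1:ℝ)/2) • (H * A₂)) H₃)ᵀ * (Smat C H)⁻¹ *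
        fromBlocks A₂ 0 (((1:ℝ)/2) • (H * A₂)) H₃ =
      fromBlocks (A₂ᵀ * C⁻¹ * A₂) 0 0 ((12:ℝ) • (H₃ᵀ * (H * C * Hᵀ)⁻¹ * H₃)) := by
  have hC1 : C * C⁻¹ = 1 := mul_nonsing_inv C hC
  have hC2 : C⁻¹ * C = 1 := nonsing_inv_mul C hC
  have hV1 : H * C * Hᵀ * (H * C * Hᵀ)⁻¹ = 1 := mul_nonsing_inv _ hV
  have hB : H * (C * (Hᵀ * (H * (C * Hᵀ))⁻¹)) = 1 := by
    simpa [Matrix.mul_assoc] using hV1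
  have hA : H * (C * (Hᵀ * ((H * (C * Hᵀ))⁻¹ * H))) = H := by
    have := congrArg (· * H) hV1
    simpa [Matrix.mul_assoc] using this
  have hSinv : (Smat C H)⁻¹ =
      fromBlocks (C⁻¹ + (3:ℝ) • (Hᵀ * (H * C * Hᵀ)⁻¹ * H)) ((-6:ℝ) • (Hᵀ * (H * C * Hᵀ)⁻¹))
        ((-6:ℝ) • ((H * C * Hᵀ)⁻¹ * H)) ((12:ℝ) • (H * C * Hᵀ)⁻¹) := by
    apply inv_eq_right_inv
    rw [Smat, fromBlocks_multiply, ← fromBlocks_one, fromBlocks_inj]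
    refine ⟨?_, ?_, ?_, ?_⟩ <;>
      · simp only [Matrix.mul_add, Matrix.add_mul, Matrix.mul_smul, Matrix.smul_mul,
          smul_smul, Matrix.mul_assoc, hC1, hC2, hA, hB, Matrix.mul_one, Matrix.one_mul]
        module
  rw [hSinv, fromBlocks_transpose, fromBlocks_multiply, fromBlocks_multiply, fromBlocks_inj]
  refine ⟨?_, ?_, ?_, ?_⟩ <;>
    · simp only [Matrix.mul_add, Matrix.add_mul, Matrix.mul_smul, Matrix.smul_mul,
        smul_smul, Matrix.mul_assoc, transpose_smul, transpose_mul, transpose_zero,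
        Matrix.zero_mul, Matrix.mul_zero, add_zero, zero_add, Matrix.mul_one, Matrix.one_mul]
      module
end

section
/- Suppose C and V := H C Hᵀ are invertible, and let D be any real dX×dX matrix. Then the product S(C,H)⁻¹ · S(D,H) is block upper triangular with diagonal blocks C⁻¹ D and V⁻¹ H D Hᵀ (and vanishing lower-left block); consequently trace((S(C,H)⁻¹ S(D,H))²) = trace((C⁻¹ D)²) + trace((V⁻¹ H D Hᵀ)²). Taking D = ∂₁C, this is the trace identity defining Γ₁₁ in the paper: Tr(S⁻¹(∂₁S)S⁻¹∂₁S) = Tr(C⁻¹(∂₁C)C⁻¹∂₁C) + Tr(V⁻¹H(∂₁C)Hᵀ V⁻¹H(∂₁C)Hᵀ). -/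
open Matrix

lemma trace_fromBlocks' {n m : Type*} [Fintype n] [Fintype m]
    (A : Matrix n n ℝ) (B : Matrix n m ℝ) (C : Matrix m n ℝ) (D : Matrix m m ℝ) :
    Matrix.trace (fromBlocks A B C D) = Matrix.trace A + Matrix.trace D := by
  simp [Matrix.trace, Fintype.sum_sum_type, fromBlocks, Matrix.diag]

/-- `S(C,H)⁻¹ · S(D,H)` is block upper triangular with diagonal blocks `C⁻¹D` and
`V⁻¹HDHᵀ`, and the trace identity defining `Γ₁₁` in the paper. -/
theorem stmt7 {dX dY : ℕ} (C : Matrix (Fin dX) (Fin dX) ℝ)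
    (H : Matrix (Fin dY) (Fin dX) ℝ)
    (hC : IsUnit C.det) (hV : IsUnit (H * C * Hᵀ).det)
    (D : Matrix (Fin dX) (Fin dX) ℝ) :
    ((Smat C H)⁻¹ * Smat D H).toBlocks₂₁ = 0 ∧
    ((Smat C H)⁻¹ * Smat D H).toBlocks₁₁ = C⁻¹ * D ∧
    ((Smat C H)⁻¹ * Smat D H).toBlocks₂₂ = (H * C * Hᵀ)⁻¹ * (H * D * Hᵀ) ∧
    Matrix.trace (((Smat C H)⁻¹ * Smat D H) ^ 2) =
      Matrix.trace ((C⁻¹ * D) ^ 2) +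
        Matrix.trace (((H * C * Hᵀ)⁻¹ * (H * D * Hᵀ)) ^ 2) := by
  set V := H * C * Hᵀ with hVdef
  set X : Matrix (Fin dX ⊕ Fin dY) (Fin dX ⊕ Fin dY) ℝ :=
    fromBlocks (C⁻¹ + (3:ℝ) • (Hᵀ * V⁻¹ * H)) (-((6:ℝ) • (Hᵀ * V⁻¹)))
      (-((6:ℝ) • (V⁻¹ * H))) ((12:ℝ) • V⁻¹) with hXdef
  have hCinv : C⁻¹ * C = 1 := nonsing_inv_mul C hC
  have hVinv : V⁻¹ * V = 1 := nonsing_inv_mul V hV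
  have hC2 : C⁻¹ * (C * Hᵀ) = Hᵀ := by rw [← Matrix.mul_assoc, hCinv, Matrix.one_mul]
  have hV2 : V⁻¹ * (H * (C * Hᵀ)) = 1 := by
    rw [← Matrix.mul_assoc H C Hᵀ, ← hVdef, hVinv]
  have hXS : X * Smat C H = 1 := by
    rw [hXdef, Smat, ← fromBlocks_one, fromBlocks_multiply, fromBlocks_inj]
    refine ⟨?_, ?_, ?_, ?_⟩
    · simp only [Matrix.add_mul, Matrix.smul_mul, Matrix.mul_smul, Matrix.neg_mul,
        Matrix.mul_assoc, hCinv]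
      module
    · simp only [Matrix.add_mul, Matrix.smul_mul, Matrix.mul_smul, Matrix.neg_mul,
        Matrix.mul_assoc, hC2, hV2, Matrix.mul_one]
      module
    · simp only [Matrix.smul_mul, Matrix.mul_smul, Matrix.neg_mul, Matrix.mul_assoc]
      module
    · simp only [Matrix.smul_mul, Matrix.mul_smul, Matrix.neg_mul, Matrix.mul_assoc,
        hV2]
      module
  have hinv : (Smat C H)⁻¹ = X := inv_eq_left_inv hXS
  have hkey : (Smat C H)⁻¹ * Smat D H =
      fromBlocks (C⁻¹ * D)
        (((1:ℝ)/2) • (C⁻¹ * (D * Hᵀ)) - ((1:ℝ)/2) • (Hᵀ * (V⁻¹ * (H * (D * Hᵀ)))))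
        0 (V⁻¹ * (H * D * Hᵀ)) := by
    rw [hinv, hXdef, Smat, fromBlocks_multiply, fromBlocks_inj]
    refine ⟨?_, ?_, ?_, ?_⟩
    · simp only [Matrix.add_mul, Matrix.smul_mul, Matrix.mul_smul, Matrix.neg_mul,
        Matrix.mul_assoc]
      module
    · simp only [Matrix.add_mul, Matrix.smul_mul, Matrix.mul_smul, Matrix.neg_mul,
        Matrix.mul_assoc]
      module
    · simp only [Matrix.smul_mul, Matrix.mul_smul, Matrix.neg_mul, Matrix.mul_assoc]
      module
    · simp only [Matrix.smul_mul, Matrix.mul_smul, Matrix.neg_mul, Matrix.mul_assoc]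
      module
  refine ⟨?_, ?_, ?_, ?_⟩
  · rw [hkey]; rfl
  · rw [hkey]; rfl
  · rw [hkey, toBlocks_fromBlocks₂₂, Matrix.mul_assoc]
  · rw [hkey, sq, fromBlocks_multiply, trace_fromBlocks']
    simp [sq, Matrix.mul_assoc]
end

section
/- Suppose C and V := H C Hᵀ are invertible. Then for all x, a ∈ ℝ^dX and y ∈ ℝ^dY, ⟨x ⊕ y, S(C,H)⁻¹ (a ⊕ (1/2)·H a)⟩ = ⟨x, C⁻¹ a⟩. This is the algebraic reduction (4.27) of the paper, by which the score component M_n^(2) built from the full S⁻¹-pairing reduces to the pairing C⁻¹[h^(−1/2)B Δw, ∂₂A] involving only the first component of the system. -/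
open Matrix

/-- The algebraic reduction (4.27) of the paper:
`⟨x ⊕ y, S(C,H)⁻¹ (a ⊕ (1/2)·H a)⟩ = ⟨x, C⁻¹ a⟩`. -/
theorem stmt16 {dX dY : ℕ} (C : Matrix (Fin dX) (Fin dX) ℝ)
    (H : Matrix (Fin dY) (Fin dX) ℝ)
    (hC : IsUnit C.det) (hV : IsUnit (H * C * Hᵀ).det)
    (x a : Fin dX → ℝ) (y : Fin dY → ℝ) :
    Sum.elim x y ⬝ᵥ (Smat C H)⁻¹.mulVec (Sum.elim a (((1:ℝ)/2) • H.mulVec a)) =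
      x ⬝ᵥ C⁻¹.mulVec a := by
  have hCinv : Invertible C := C.invertibleOfIsUnitDet hC
  -- S is invertible
  have hSdet : IsUnit (Smat C H).det := by
    rw [Smat, det_fromBlocks₁₁]
    have heq : (((1:ℝ)/3) • (H * C * Hᵀ) - ((1:ℝ)/2) • (H * C) * (⅟ C) * (((1:ℝ)/2) • (C * Hᵀ)))
        = ((1:ℝ)/12) • (H * C * Hᵀ) := by
      rw [invOf_eq_nonsing_inv]
      rw [Matrix.smul_mul, Matrix.smul_mul, Matrix.mul_smul, smul_smul]
      rw [show H * C * C⁻¹ * (C * Hᵀ) = H * C * Hᵀ by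
        rw [Matrix.mul_assoc (H * C), nonsing_inv_mul_cancel_left _ _ hC]]
      rw [← sub_smul]
      norm_num
    rw [heq, det_smul]
    exact hC.mul ((IsUnit.pow _ (by norm_num : IsUnit ((1:ℝ)/12))).mul hV)
  -- the key vector identity
  have key : (Smat C H).mulVec (Sum.elim (C⁻¹.mulVec a) 0) =
      Sum.elim a (((1:ℝ)/2) • H.mulVec a) := by
    rw [Smat, fromBlocks_mulVec]
    simp only [Sum.elim_comp_inl, Sum.elim_comp_inr, mulVec_zero, add_zero, mulVec_mulVec, mul_nonsing_inv _ hC, one_mulVec,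
      smul_mulVec]
    rw [Matrix.smul_mul, Matrix.mul_assoc, mul_nonsing_inv _ hC, Matrix.mul_one,
      smul_mulVec]
  have : (Smat C H)⁻¹.mulVec (Sum.elim a (((1:ℝ)/2) • H.mulVec a))
      = Sum.elim (C⁻¹.mulVec a) 0 := by
    rw [← key, mulVec_mulVec, nonsing_inv_mul _ hSdet, one_mulVec]
  rw [this, sumElim_dotProduct_sumElim]
  simp
end
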